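/- If (w₁, w₂) is a well-balanced pair of words over {O,U} (|w₁| even, #O(w₁) = #U(w₂), #U(w₁) = #O(w₂)), then #O(w₁) ≡ #U(w₁) ≡ #O(w₂) ≡ #U(w₂) (mod 2), and moreover Φ(w₁) ≡ Φ(w₂) (mod 2). -/

import Mathlib

inductive Letter : Type
  | O : Letter
  | U : Letter
  deriving DecidableEq, BEq, Repr

open Letter

/-- number of O's in a word -/
def countO (w : List Letter) : ℕ := w.count O

/-- number of U's in a word -/
def countU (w : List Letter) : ℕ := w.count U

/-- number of O's in odd 1-based positions (even 0-based index) -/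
def NOo (w : List Letter) : ℕ := ((w.zipIdx.map Prod.swap).filter (fun p => p.1 % 2 == 0 && p.2 == O)).length

/-- number of O's in even 1-based positions -/
def NOe (w : List Letter) : ℕ := ((w.zipIdx.map Prod.swap).filter (fun p => p.1 % 2 == 1 && p.2 == O)).length

/-- number of U's in odd 1-based positions -/
def NUo (w : List Letter) : ℕ := ((w.zipIdx.map Prod.swap).filter (fun p => p.1 % 2 == 0 && p.2 == U)).length

/-- number of U's in even 1-based positions -/
def NUe (w : List Letter) : ℕ := ((w.zipIdx.map Prod.swap).filter (fun p => p.1 % 2 == 1 && p.2 == U)).length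

/-- twice the OU signed quantity: N^O_e + N^U_o − N^O_o − N^U_e -/
def twoPhi (w : List Letter) : ℤ := (NOe w : ℤ) + NUo w - NOo w - NUe w

/-- the (signed) OU number Φ of a word of even length -/
def Phi (w : List Letter) : ℤ := twoPhi w / 2

/-- cyclic access to the letters of a word -/
def cget (w : List Letter) (i : ℕ) : Letter := w.getD (i % w.length) O

/-- a cyclic occurrence of the factor `OU` at position `i` -/
def OUat (w : List Letter) (i : ℕ) : Prop := cget w i = O ∧ cget w (i + 1) = U

/-- a cyclic occurrence of the factor `UO` at position `i` -/
def UOat (w : List Letter) (i : ℕ) : Prop := cget w i = U ∧ cget w (i + 1) = O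

instance (w : List Letter) (i : ℕ) : Decidable (OUat w i) := by unfold OUat; infer_instance
instance (w : List Letter) (i : ℕ) : Decidable (UOat w i) := by unfold UOat; infer_instance

/-- the cyclic factors at positions `i` and `j` (each occupying `{i, i+1 mod n}`) are disjoint -/
def PairDisjoint (n i j : ℕ) : Prop :=
  i ≠ j ∧ i ≠ (j + 1) % n ∧ (i + 1) % n ≠ j ∧ (i + 1) % n ≠ (j + 1) % n

/-- a word is alternating in the cyclic sense -/
def CyclicAlternating (w : List Letter) : Prop :=
  w.Chain' (· ≠ ·) ∧ ∀ a ∈ w.head?, ∀ b ∈ w.getLast?, a ≠ b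

/-- one reduction: delete two adjacent equal letters -/
def Reduces (w w' : List Letter) : Prop :=
  ∃ a b x, w = a ++ x :: x :: b ∧ w' = a ++ b

/-- `ReducesN k w w'` : `w'` is obtained from `w` by exactly `k` reductions -/
inductive ReducesN : ℕ → List Letter → List Letter → Prop
  | refl (w : List Letter) : ReducesN 0 w w
  | step {k : ℕ} {w w' w'' : List Letter} :
      Reduces w w' → ReducesN k w' w'' → ReducesN (k + 1) w w''

/-! For a word of even length the positions of either parity are equally many, so
`N^U_o - N^U_e = N^O_e - N^O_o` and `Φ = N^O_e - N^O_o` exactly; in particular `Φ ≡ #O (mod 2)`.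
In a well-balanced pair `|w₁|` is even, so `#O(w₁) ≡ #U(w₁) = #O(w₂) (mod 2)`, and `|w₂| = |w₁|`. -/

instance : LawfulBEq Letter where
  rfl {a} := by cases a <;> rfl
  eq_of_beq {a b} := by cases a <;> cases b <;> simp +decide

/-- Occurrences of `c` in `w` at an index `≡ r (mod 2)`, indices starting at `n`; `NOo`, `NOe`,
`NUo`, `NUe` are the cases `n = 0` (so index `0` is the paper's position `1`). -/
def countAt (c : Letter) (r n : ℕ) (w : List Letter) : ℕ :=
  (((w.zipIdx n).map Prod.swap).filter (fun p => p.1 % 2 == r && p.2 == c)).length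

theorem countAt_cons (c : Letter) (r n : ℕ) (x : Letter) (w : List Letter) :
    countAt c r n (x :: w) = (if n % 2 = r ∧ x = c then 1 else 0) + countAt c r (n + 1) w := by
  simp only [countAt, List.zipIdx_cons, List.map_cons, Prod.swap, List.filter_cons]
  split <;> simp_all [add_comm]

theorem countAt_zero_add_countAt_one (c : Letter) :
    ∀ (n : ℕ) (w : List Letter), countAt c 0 n w + countAt c 1 n w = w.count c
  | _, [] => rfl
  | n, x :: w => by
    rw [countAt_cons, countAt_cons, List.count_cons, ← countAt_zero_add_countAt_one c (n + 1) w]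
    rcases Nat.mod_two_eq_zero_or_one n with hn | hn <;> by_cases hx : x = c <;> simp [hn, hx] <;>
      omega

theorem countAt_balanced :
    ∀ (n : ℕ) (w : List Letter), Even w.length →
      countAt O 0 n w + countAt U 0 n w = countAt O 1 n w + countAt U 1 n w
  | _, [], _ => rfl
  | _, [_], h => absurd h (by simp)
  | n, x :: y :: w, h => by
    have ih := countAt_balanced (n + 1 + 1) w (by simpa [Nat.even_add_one] using h)
    simp only [countAt_cons]
    cases x <;> cases y <;> simp only [reduceCtorEq, and_true, and_false] <;> split_ifs <;> omega

theorem countO_add_countU (w : List Letter) : countO w + countU w = w.length := by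
  induction w with
  | nil => rfl
  | cons x w ih => cases x <;> simp_all [countO, countU] <;> omega

theorem Phi_eq_NOe_sub_NOo {w : List Letter} (hw : Even w.length) :
    Phi w = (NOe w : ℤ) - NOo w := by
  have hbal : NOo w + NUo w = NOe w + NUe w := countAt_balanced 0 w hw
  unfold Phi twoPhi
  omega

theorem Phi_modEq_countO {w : List Letter} (hw : Even w.length) :
    Phi w ≡ countO w [ZMOD 2] := by
  have hO : NOo w + NOe w = countO w := countAt_zero_add_countAt_one O 0 w
  rw [Phi_eq_NOe_sub_NOo hw, Int.modEq_iff_dvd]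
  exact ⟨NOo w, by omega⟩

theorem stmt13 (w₁ w₂ : List Letter) (h1 : Even w₁.length)
    (h2 : countO w₁ = countU w₂) (h3 : countU w₁ = countO w₂) :
    countO w₁ % 2 = countU w₁ % 2 ∧ countU w₁ % 2 = countO w₂ % 2 ∧
      countO w₂ % 2 = countU w₂ % 2 ∧ Phi w₁ ≡ Phi w₂ [ZMOD 2] := by
  have hw₁ := countO_add_countU w₁
  have hw₂ := countO_add_countU w₂
  have hlen : w₂.length = w₁.length := by omega
  have hpar := Nat.even_iff.mp h1
  have hO : countO w₁ ≡ countO w₂ [ZMOD 2] := by unfold Int.ModEq; omega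
  refine ⟨by omega, by omega, by omega, ?_⟩
  exact (Phi_modEq_countO h1).trans (hO.trans (Phi_modEq_countO (hlen ▸ h1)).symm)
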